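/- For all x, y : ZFSet and every nonempty open J ⊆ ℝ: J ⊩ x̂ = ŷ if and only if x = y; and J ⊩ x̂ ∈ ŷ if and only if x ∈ y. -/

import Mathlib

/-- Names over ℝ: a name is a family of pairs of a name and an open set of reals. -/
inductive Name : Type 1
  | mk (ι : Type) (elem : ι → Name) (cond : ι → Set ℝ) (hopen : ∀ i, IsOpen (cond i)) : Name

namespace Name

/-- The index type of the family of pairs of a name. -/
def idx : Name → Type
  | mk ι _ _ _ => ι

/-- The name component of the `i`-th pair. -/
def elem : (σ : Name) → σ.idx → Name
  | mk _ e _ _ => e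

/-- The open-set component of the `i`-th pair. -/
def cond : (σ : Name) → σ.idx → Set ℝ
  | mk _ _ c _ => c

theorem cond_isOpen : ∀ (σ : Name) (i : σ.idx), IsOpen (σ.cond i)
  | mk _ _ _ h => h

/-- Rank of a name, used for the recursive definition of forcing. -/
noncomputable def rank : Name → Ordinal.{0}
  | mk _ e _ _ => Ordinal.lsub fun i => rank (e i)

theorem rank_elem_lt : ∀ (σ : Name) (i : σ.idx), (σ.elem i).rank < σ.rank
  | mk ι e c h, i => by
    simpa [rank, elem] using Ordinal.lt_lsub (fun i => rank (e i)) i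

theorem lex_max_min_lt_left {a a' b : Ordinal.{0}} (h : a' < a) :
    Prod.Lex (· < ·) (· < ·) (max a' b, min a' b) (max a b, min a b) := by
  rcases lt_or_ge (max a' b) (max a b) with h1 | h1
  · exact Prod.Lex.left _ _ h1
  · have h2 : max a' b = max a b := le_antisymm (max_le_max h.le le_rfl) h1
    rw [h2]
    apply Prod.Lex.right
    rcases le_total a b with hab | hab
    · rw [min_eq_left hab, min_eq_left (h.le.trans hab)]; exact h
    · rw [max_eq_left hab] at h2
      have h3 : a' < b := by
        by_contra hc
        rw [not_lt] at hc
        rw [max_eq_left hc] at h2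
        exact h.ne h2
      rw [min_eq_right hab, min_eq_left h3.le]; exact h3

theorem lex_max_min_lt_right {a b b' : Ordinal.{0}} (h : b' < b) :
    Prod.Lex (· < ·) (· < ·) (max a b', min a b') (max a b, min a b) := by
  rw [max_comm a b', min_comm a b', max_comm a b, min_comm a b]
  exact lex_max_min_lt_left h

mutual
  /-- `feq σ τ J` means `J ⊩ σ = τ`. -/
  def feq (σ τ : Name) (J : Set ℝ) : Prop :=
    (∀ i : σ.idx, fmem (σ.elem i) τ (J ∩ σ.cond i)) ∧
    (∀ j : τ.idx, fmem (τ.elem j) σ (J ∩ τ.cond j))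
  termination_by (max σ.rank τ.rank, min σ.rank τ.rank)
  decreasing_by
    · exact lex_max_min_lt_left (rank_elem_lt σ i)
    · rw [max_comm σ.rank, min_comm σ.rank]
      exact lex_max_min_lt_left (rank_elem_lt τ j)

  /-- `fmem σ τ J` means `J ⊩ σ ∈ τ`. -/
  def fmem (σ τ : Name) (J : Set ℝ) : Prop :=
    ∀ r ∈ J, ∃ (j : τ.idx) (J' : Set ℝ), IsOpen J' ∧ r ∈ J' ∩ τ.cond j ∧
      feq σ (τ.elem j) (J' ∩ τ.cond j)
  termination_by (max σ.rank τ.rank, min σ.rank τ.rank)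
  decreasing_by
    exact lex_max_min_lt_right (rank_elem_lt τ j)
end

end Name

namespace Name

/-- Canonical name of a hereditary set (by ∈-recursion): pairs ⟨ŷ, univ⟩ for members y. -/
def ofPSet : PSet → Name
  | PSet.mk α A => Name.mk α (fun a => ofPSet (A a)) (fun _ => Set.univ) (fun _ => isOpen_univ)

/-- Canonical name of a ZF set. -/
noncomputable def canonical (x : ZFSet) : Name := ofPSet x.out

end Name


/-!
Canonical names attach the condition `univ` to every pair, so for them the clauses defining
`J ⊩ x̂ = ŷ` and `J ⊩ x̂ ∈ ŷ` no longer depend on `J`, except that membership needs a point of `J`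
to start from. For nonempty `J` they thus become, by a simultaneous recursion on rank mirroring
that of `feq` and `fmem`, the clauses defining extensional equivalence and membership of pre-sets.
-/

namespace Name

theorem feq_ofPSet_mk {α β : Type} (A : α → PSet) (B : β → PSet) (J : Set ℝ) :
    feq (ofPSet ⟨α, A⟩) (ofPSet ⟨β, B⟩) J ↔
      (∀ a, fmem (ofPSet (A a)) (ofPSet ⟨β, B⟩) J) ∧
        ∀ b, fmem (ofPSet (B b)) (ofPSet ⟨α, A⟩) J := by
  rw [feq]
  simp only [ofPSet, cond, Set.inter_univ]
  rfl

theorem fmem_ofPSet_mk (σ : Name) {β : Type} (B : β → PSet) (J : Set ℝ) :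
    fmem σ (ofPSet ⟨β, B⟩) J ↔
      ∀ r ∈ J, ∃ b, ∃ J' : Set ℝ, IsOpen J' ∧ r ∈ J' ∧ feq σ (ofPSet (B b)) J' := by
  rw [fmem]
  simp only [ofPSet, cond, Set.inter_univ]
  rfl

mutual

theorem feq_ofPSet_iff (u v : PSet) {J : Set ℝ} (hJ : J.Nonempty) :
    feq (ofPSet u) (ofPSet v) J ↔ u.Equiv v := by
  obtain ⟨α, A⟩ := u
  obtain ⟨β, B⟩ := v
  rw [feq_ofPSet_mk, PSet.Equiv.ext]
  exact and_congr (forall_congr' fun a => fmem_ofPSet_iff (A a) _ hJ)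
    (forall_congr' fun b => fmem_ofPSet_iff (B b) _ hJ)
termination_by (max (ofPSet u).rank (ofPSet v).rank, min (ofPSet u).rank (ofPSet v).rank)
decreasing_by
  · exact lex_max_min_lt_left (rank_elem_lt (ofPSet ⟨α, A⟩) a)
  · rw [max_comm, min_comm]
    exact lex_max_min_lt_right (rank_elem_lt (ofPSet ⟨β, B⟩) b)

theorem fmem_ofPSet_iff (u v : PSet) {J : Set ℝ} (hJ : J.Nonempty) :
    fmem (ofPSet u) (ofPSet v) J ↔ u ∈ v := by
  obtain ⟨β, B⟩ := v
  obtain ⟨r, hr⟩ := hJ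
  rw [fmem_ofPSet_mk, PSet.mem_def]
  constructor
  · intro h
    obtain ⟨b, J', -, hrJ', hfeq⟩ := h r hr
    exact ⟨b, (feq_ofPSet_iff u (B b) ⟨r, hrJ'⟩).1 hfeq⟩
  · rintro ⟨b, hb⟩ s -
    exact ⟨b, Set.univ, isOpen_univ, Set.mem_univ s,
      (feq_ofPSet_iff u (B b) Set.univ_nonempty).2 hb⟩
termination_by (max (ofPSet u).rank (ofPSet v).rank, min (ofPSet u).rank (ofPSet v).rank)
decreasing_by
  all_goals exact lex_max_min_lt_right (rank_elem_lt (ofPSet ⟨β, B⟩) b)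

end

end Name

theorem canonical_forcing (x y : ZFSet) (J : Set ℝ) (hJ : IsOpen J) (hne : J.Nonempty) :
    (Name.feq (Name.canonical x) (Name.canonical y) J ↔ x = y) ∧
    (Name.fmem (Name.canonical x) (Name.canonical y) J ↔ x ∈ y) := by
  simp only [Name.canonical, Name.feq_ofPSet_iff _ _ hne, Name.fmem_ofPSet_iff _ _ hne, ← ZFSet.eq,
    ← ZFSet.mk_mem_iff, ZFSet.mk_out, and_self]
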